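/- Let c > 1/2 and δ > 0 be fixed. Let ℓ ≥ 3 and let ℓ_1, ℓ_2, ℓ_3 be positive integers with ℓ_1+ℓ_2+ℓ_3 = ℓ. Then there exist constants C > 0 and ρ ∈ (0,1), depending only on ℓ, c and δ, such that for all n ≥ 1, all vectors y_1,…,y_{ℓ−2} ∈ ℝ^n, and all signs ε_1,…,ε_{ℓ−2} ∈ {1,−1}: V_n^{−2ℓc} ∫_{ℝ^n}∫_{ℝ^n} f(x_1)·( ∏_{i=1}^{ℓ_1−1} f(ε_i x_1 + y_i) )·f(x_2)·( ∏_{i=ℓ_1}^{ℓ_1+ℓ_2−2} f(ε_i x_2 + y_i) )·( ∏_{i=ℓ_1+ℓ_2−1}^{ℓ−2} f(ε_i(x_1+x_2) + y_i) ) dx_1 dx_2 ≤ C·ρ^n, where f = f_{c,δ}. -/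

import Mathlib

open MeasureTheory

/-- `V_n = π^{n/2} / Γ(n/2 + 1)`, the volume of the unit ball in `ℝⁿ`. -/
noncomputable def unitBallVol (n : ℕ) : ℝ :=
  Real.pi ^ ((n : ℝ) / 2) / Real.Gamma ((n : ℝ) / 2 + 1)

/-- `R_n(δ) = (δ / V_n)^{1/n}`, the radius of a ball of volume `δ` in `ℝⁿ`. -/
noncomputable def cutRadius (n : ℕ) (δ : ℝ) : ℝ :=
  (δ / unitBallVol n) ^ (1 / (n : ℝ))

/-- `f_{c,δ}(x) = |x|^{-2cn}` if `|x| > R_n(δ)`, and `0` otherwise. -/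
noncomputable def truncPower (n : ℕ) (c δ : ℝ) (x : EuclideanSpace ℝ (Fin n)) : ℝ :=
  if cutRadius n δ < ‖x‖ then ‖x‖ ^ (-(2 * c * (n : ℝ))) else 0

/-
Write `f = f_{c,δ}`, `R = R_n(δ)` and `a = 2cn`, so that `0 ≤ f ≤ R^{-a}` and, in polar
coordinates, `∫ f = V_n R^{n-a} / (2c - 1)`. Bounding every factor except `f(x₁)`, `f(x₂)` and
one factor `f(ε_j (x₁ + x₂) + y_j)` of the third product by `R^{-a}` leaves
`R^{-a(ℓ-3)} ∫ f(x₁) P(x₁ + ε_j y_j) dx₁`, where `P(b) = ∫ f(x) f(x + b) dx`.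
Always `P(b) ≤ R^{-a} ∫ f`. If `|b| ≥ R/2`, the parallelogram law at the midpoint `z` of `x`
and `x + b` gives `|x| |x + b| ≥ (R/t) |z|` once `|z| > R t`, for any `t` with `t² ≥ 15/16`;
together with `|x| |x + b| ≥ R²` this is a radial majorant of `f(x) f(x + b)` whose integral
gains the factor `t^n`. The `x₁` with `|x₁ + ε_j y_j| < R/2` form a ball of volume
`2^{-n} V_n R^n ≤ t^n V_n R^n`, so the double integral is `O(t^n V_n² R^{n(2-2cℓ)})`, and
`V_n^{-2ℓc} V_n² R^{n(2-2cℓ)} = δ^{2-2cℓ}` because `V_n R^n = δ`.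
-/

open Metric Set Module

section Radial

variable {E : Type*} [NormedAddCommGroup E]

noncomputable def truncRpow (r a : ℝ) (x : E) : ℝ := if r < ‖x‖ then ‖x‖ ^ (-a) else 0

lemma truncRpow_nonneg (r a : ℝ) (x : E) : 0 ≤ truncRpow r a x := by
  unfold truncRpow; split_ifs <;> positivity

lemma truncRpow_le {r a : ℝ} (hr : 0 < r) (ha : 0 ≤ a) (x : E) : truncRpow r a x ≤ r ^ (-a) := by
  unfold truncRpow
  split_ifs with h
  · exact Real.rpow_le_rpow_of_nonpos hr h.le (neg_nonpos.2 ha)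
  · positivity

lemma truncRpow_even (r a : ℝ) : Function.Even (truncRpow (E := E) r a) := fun x => by
  simp only [truncRpow, norm_neg]

variable [MeasurableSpace E] [BorelSpace E]

lemma measurable_truncRpow (r a : ℝ) : Measurable (truncRpow (E := E) r a) :=
  Measurable.ite (measurableSet_lt measurable_const measurable_norm) (by fun_prop) measurable_const

variable [NormedSpace ℝ E] [FiniteDimensional ℝ E] (μ : Measure E) [μ.IsAddHaarMeasure]

lemma pow_pred_smul_ite_rpow_eq_indicator {r a y : ℝ} {d : ℕ} (hd : 0 < d) (hy : 0 < y) :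
    y ^ (d - 1) • (if r < y then y ^ (-a) else 0) =
      (Ioi r).indicator (· ^ ((d : ℝ) - 1 - a)) y := by
  rw [← Real.rpow_natCast, Nat.cast_pred hd, smul_eq_mul, mul_ite, mul_zero,
    ← Real.rpow_add hy, ← sub_eq_add_neg]
  rfl

variable [Nontrivial E]

lemma integrable_truncRpow {r a : ℝ} (hr : 0 < r) (ha : finrank ℝ E < a) :
    Integrable (truncRpow r a) μ := by
  refine (integrable_fun_norm_addHaar μ (f := fun y : ℝ => if r < y then y ^ (-a) else 0)).2 ?_
  refine (integrableOn_congr_fun (fun y (hy : 0 < y) =>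
    pow_pred_smul_ite_rpow_eq_indicator finrank_pos hy) measurableSet_Ioi).2 ?_
  exact ((integrableOn_Ioi_rpow_of_lt (by linarith) hr).integrable_indicator
    measurableSet_Ioi).integrableOn

lemma integral_truncRpow {r a : ℝ} (hr : 0 < r) (ha : finrank ℝ E < a) :
    ∫ x, truncRpow r a x ∂μ =
      μ.real (ball 0 1) * finrank ℝ E / (a - finrank ℝ E) * r ^ (finrank ℝ E - a) := by
  have h := integral_fun_norm_addHaar μ (fun y : ℝ => if r < y then y ^ (-a) else 0)
  rw [setIntegral_congr_fun measurableSet_Ioi fun y hy =>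
      pow_pred_smul_ite_rpow_eq_indicator finrank_pos hy,
    setIntegral_indicator measurableSet_Ioi, Ioi_inter_Ioi, max_eq_right hr.le,
    integral_Ioi_rpow_of_lt (by linarith) hr,
    show (finrank ℝ E : ℝ) - 1 - a + 1 = finrank ℝ E - a by ring, neg_div, ← div_neg,
    neg_sub] at h
  simp only [truncRpow, h, nsmul_eq_mul, smul_eq_mul]
  ring

end Radial

section ThreeFold

variable {E : Type*} [NormedAddCommGroup E] {f : E → ℝ}

lemma mul_apply_add_le_add_indicator {P : E → ℝ} {S A B r : ℝ} (hf0 : ∀ x, 0 ≤ f x)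
    (hfS : ∀ x, f x ≤ S) (hA0 : 0 ≤ A) (hB0 : 0 ≤ B) (hA : ∀ b, r ≤ ‖b‖ → P b ≤ A)
    (hB : ∀ b, P b ≤ B) (w x : E) :
    f x * P (x + w) ≤ A * f x + S * B * (closedBall (-w) r).indicator 1 x := by
  have hS : 0 ≤ S := (hf0 x).trans (hfS x)
  by_cases hfar : r ≤ ‖x + w‖
  · have : 0 ≤ S * B * (closedBall (-w) r).indicator 1 x :=
      mul_nonneg (mul_nonneg hS hB0) (indicator_nonneg (fun _ _ => zero_le_one) x)
    nlinarith [mul_le_mul_of_nonneg_left (hA _ hfar) (hf0 x)]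
  · have hx : x ∈ closedBall (-w) r := by
      rw [mem_closedBall, dist_eq_norm, sub_neg_eq_add]
      exact (not_le.1 hfar).le
    rw [indicator_of_mem hx, Pi.one_apply, mul_one]
    nlinarith [(mul_le_mul_of_nonneg_left (hB (x + w)) (hf0 x)).trans
      (mul_le_mul_of_nonneg_right (hfS x) hB0), mul_nonneg hA0 (hf0 x)]

variable [NormedSpace ℝ E]

def shiftedThreeFoldIntegrand (f : E → ℝ) (ℓ ℓ₁ ℓ₂ : ℕ) (y : ℕ → E) (ε : ℕ → ℝ) (x₁ x₂ : E) : ℝ :=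
  f x₁ * (∏ i ∈ Finset.Ico 1 ℓ₁, f (ε i • x₁ + y i)) *
    f x₂ * (∏ i ∈ Finset.Ico ℓ₁ (ℓ₁ + ℓ₂ - 1), f (ε i • x₂ + y i)) *
    (∏ i ∈ Finset.Ico (ℓ₁ + ℓ₂ - 1) (ℓ - 1), f (ε i • (x₁ + x₂) + y i))

lemma Function.Even.apply_sign_smul_add (hf : Function.Even f) {ε : ℝ} (hε : ε = 1 ∨ ε = -1)
    (w y : E) : f (ε • w + y) = f (w + ε • y) := by
  rcases hε with rfl | rfl
  · simp only [one_smul]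
  · rw [← hf]
    congr 1
    module

lemma shiftedThreeFoldIntegrand_nonneg (hf0 : ∀ x, 0 ≤ f x) (ℓ ℓ₁ ℓ₂ : ℕ) (y : ℕ → E)
    (ε : ℕ → ℝ) (x₁ x₂ : E) : 0 ≤ shiftedThreeFoldIntegrand f ℓ ℓ₁ ℓ₂ y ε x₁ x₂ := by
  have hprod : ∀ (s : Finset ℕ) (g : ℕ → E), 0 ≤ ∏ i ∈ s, f (g i) :=
    fun s g => Finset.prod_nonneg fun i _ => hf0 (g i)
  unfold shiftedThreeFoldIntegrand
  exact mul_nonneg (mul_nonneg (mul_nonneg (mul_nonneg (hf0 _) (hprod _ _)) (hf0 _))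
    (hprod _ _)) (hprod _ _)

lemma shiftedThreeFoldIntegrand_le {S : ℝ} (hf0 : ∀ x, 0 ≤ f x) (hfS : ∀ x, f x ≤ S)
    (hf : Function.Even f) {ℓ ℓ₁ ℓ₂ : ℕ} (h₁ : 0 < ℓ₁) (h₂ : 0 < ℓ₂) (h₁₂ : ℓ₁ + ℓ₂ < ℓ)
    (y : ℕ → E) {ε : ℕ → ℝ} (hε : ∀ i, ε i = 1 ∨ ε i = -1) (x₁ x₂ : E) :
    shiftedThreeFoldIntegrand f ℓ ℓ₁ ℓ₂ y ε x₁ x₂ ≤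
      S ^ (ℓ - 3) * f x₁ *
        (f x₂ * f (x₂ + (x₁ + ε (ℓ₁ + ℓ₂ - 1) • y (ℓ₁ + ℓ₂ - 1)))) := by
  set j := ℓ₁ + ℓ₂ - 1
  have hj : j ∈ Finset.Ico j (ℓ - 1) := Finset.mem_Ico.2 ⟨le_rfl, by omega⟩
  have hprod : ∀ (s : Finset ℕ) (g : ℕ → E), ∏ i ∈ s, f (g i) ≤ S ^ s.card := fun s g =>
    (Finset.prod_le_prod (fun i _ => hf0 _) (fun i _ => hfS _)).trans_eq (Finset.prod_const S)
  have hprod0 : ∀ (s : Finset ℕ) (g : ℕ → E), 0 ≤ ∏ i ∈ s, f (g i) := fun s g =>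
    Finset.prod_nonneg fun i _ => hf0 _
  have hkept : f (ε j • (x₁ + x₂) + y j) = f (x₂ + (x₁ + ε j • y j)) := by
    rw [hf.apply_sign_smul_add (hε j), add_comm x₁ x₂, add_assoc]
  unfold shiftedThreeFoldIntegrand
  rw [← Finset.mul_prod_erase _ _ hj, hkept]
  calc _ ≤ f x₁ * S ^ (Finset.Ico 1 ℓ₁).card * f x₂ * S ^ (Finset.Ico ℓ₁ j).card *
        (f (x₂ + (x₁ + ε j • y j)) * S ^ ((Finset.Ico j (ℓ - 1)).erase j).card) := by
        have := hf0 x₁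
        have := hf0 x₂
        have := hf0 (x₂ + (x₁ + ε j • y j))
        have := hprod0 (Finset.Ico 1 ℓ₁) fun i => ε i • x₁ + y i
        have := hprod0 (Finset.Ico ℓ₁ j) fun i => ε i • x₂ + y i
        have := hprod0 ((Finset.Ico j (ℓ - 1)).erase j) fun i => ε i • (x₁ + x₂) + y i
        have : 0 ≤ S := (hf0 x₁).trans (hfS x₁)
        gcongr <;> apply hprod
    _ = S ^ ((ℓ₁ - 1) + (j - ℓ₁) + (ℓ - 1 - j - 1)) * f x₁ *
        (f x₂ * f (x₂ + (x₁ + ε j • y j))) := by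
        rw [Finset.card_erase_of_mem hj, Nat.card_Ico, Nat.card_Ico, Nat.card_Ico, pow_add,
          pow_add]
        ring
    _ = _ := by rw [show (ℓ₁ - 1) + (j - ℓ₁) + (ℓ - 1 - j - 1) = ℓ - 3 by omega]

variable [MeasurableSpace E] [BorelSpace E] [FiniteDimensional ℝ E] (μ : Measure E)
  [μ.IsAddHaarMeasure]

lemma integrable_indicator_one_closedBall (x : E) (r : ℝ) :
    Integrable ((closedBall x r).indicator (1 : E → ℝ)) μ :=
  (integrable_indicator_iff measurableSet_closedBall).2
    (integrableOn_const measure_closedBall_lt_top.ne)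

lemma integral_integral_shiftedThreeFoldIntegrand_le {S A B r : ℝ} (hf0 : ∀ x, 0 ≤ f x)
    (hfS : ∀ x, f x ≤ S) (hf : Function.Even f) (hfm : Measurable f) (hfi : Integrable f μ)
    (hA0 : 0 ≤ A) (hA : ∀ b, r ≤ ‖b‖ → ∫ x, f x * f (x + b) ∂μ ≤ A)
    (hB : ∀ b, ∫ x, f x * f (x + b) ∂μ ≤ B) {ℓ ℓ₁ ℓ₂ : ℕ} (h₁ : 0 < ℓ₁) (h₂ : 0 < ℓ₂)
    (h₁₂ : ℓ₁ + ℓ₂ < ℓ) (y : ℕ → E) {ε : ℕ → ℝ} (hε : ∀ i, ε i = 1 ∨ ε i = -1) :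
    ∫ x₁, ∫ x₂, shiftedThreeFoldIntegrand f ℓ ℓ₁ ℓ₂ y ε x₁ x₂ ∂μ ∂μ ≤
      S ^ (ℓ - 3) * (A * ∫ x, f x ∂μ + S * B * μ.real (closedBall 0 r)) := by
  set w := ε (ℓ₁ + ℓ₂ - 1) • y (ℓ₁ + ℓ₂ - 1)
  have hpair : ∀ b, Integrable (fun x => f x * f (x + b)) μ := fun b =>
    hfi.mul_bdd (hfm.comp (measurable_add_const b)).aestronglyMeasurable
      (ae_of_all _ fun x => (Real.norm_of_nonneg (hf0 _)).trans_le (hfS _))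
  have hB0 : 0 ≤ B := (integral_nonneg fun x => mul_nonneg (hf0 x) (hf0 _)).trans (hB 0)
  have hinner : ∀ x₁, ∫ x₂, shiftedThreeFoldIntegrand f ℓ ℓ₁ ℓ₂ y ε x₁ x₂ ∂μ ≤
      S ^ (ℓ - 3) * (A * f x₁ + S * B * (closedBall (-w) r).indicator 1 x₁) := fun x₁ => by
    have hS : 0 ≤ S := (hf0 x₁).trans (hfS x₁)
    calc _ ≤ ∫ x₂, S ^ (ℓ - 3) * f x₁ * (f x₂ * f (x₂ + (x₁ + w))) ∂μ :=
          integral_mono_of_nonneg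
            (ae_of_all _ (shiftedThreeFoldIntegrand_nonneg hf0 ℓ ℓ₁ ℓ₂ y ε x₁))
            ((hpair _).const_mul _)
            (ae_of_all _ (shiftedThreeFoldIntegrand_le hf0 hfS hf h₁ h₂ h₁₂ y hε x₁))
      _ = S ^ (ℓ - 3) * (f x₁ * ∫ x₂, f x₂ * f (x₂ + (x₁ + w)) ∂μ) := by
          rw [integral_const_mul, mul_assoc]
      _ ≤ _ := mul_le_mul_of_nonneg_left (mul_apply_add_le_add_indicator hf0 hfS hA0 hB0 hA hB
          w x₁) (pow_nonneg hS _)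
  have hball := integrable_indicator_one_closedBall μ (-w) r
  calc _ ≤ ∫ x₁, S ^ (ℓ - 3) * (A * f x₁ + S * B * (closedBall (-w) r).indicator 1 x₁) ∂μ :=
        integral_mono_of_nonneg
          (ae_of_all _ fun x₁ =>
            integral_nonneg (shiftedThreeFoldIntegrand_nonneg hf0 ℓ ℓ₁ ℓ₂ y ε x₁))
          (((hfi.const_mul A).add (hball.const_mul (S * B))).const_mul _) (ae_of_all _ hinner)
    _ = _ := by
        rw [integral_const_mul, integral_add (hfi.const_mul A) (hball.const_mul (S * B)),
          integral_const_mul, integral_const_mul, integral_indicator_one measurableSet_closedBall,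
          Measure.addHaar_real_closedBall_center]

end ThreeFold

section PairIntegral

variable {E : Type*} [NormedAddCommGroup E] [InnerProductSpace ℝ E]

lemma mul_norm_le_mul_norm_sub_mul_norm_add {R t : ℝ} {z v : E} (hR : 0 < R) (ht : 0 < t)
    (ht' : 15 ≤ 16 * t ^ 2) (hv : R / 4 ≤ ‖v‖) (hsub : R < ‖z - v‖) (hadd : R < ‖z + v‖)
    (hz : R * t < ‖z‖) : R * ‖z‖ ≤ t * (‖z - v‖ * ‖z + v‖) := by
  have hpar := parallelogram_law_with_norm ℝ z v
  have hsub2 := mul_le_mul hsub.le hsub.le hR.le (norm_nonneg _)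
  have hadd2 := mul_le_mul hadd.le hadd.le hR.le (norm_nonneg _)
  have hprod : R ^ 2 * (2 * ‖z‖ ^ 2 - 7 / 8 * R ^ 2) ≤ (‖z - v‖ * ‖z + v‖) ^ 2 := by
    nlinarith [mul_nonneg (sub_nonneg.2 hsub2) (sub_nonneg.2 hadd2),
      mul_le_mul hv hv (by positivity) (norm_nonneg v)]
  have hz2 : (R * t) ^ 2 ≤ ‖z‖ ^ 2 := pow_le_pow_left₀ (by positivity) hz.le 2
  refine (pow_le_pow_iff_left₀ (by positivity) (by positivity) two_ne_zero).1 ?_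
  nlinarith [mul_le_mul_of_nonneg_left hprod (sq_nonneg t)]

lemma truncRpow_sub_mul_truncRpow_add_le {R a t : ℝ} {v : E} (hR : 0 < R) (ha : 0 ≤ a)
    (ht : 0 < t) (ht' : 15 ≤ 16 * t ^ 2) (hv : R / 4 ≤ ‖v‖) (z : E) :
    truncRpow R a (z - v) * truncRpow R a (z + v) ≤
      (R / t) ^ (-a) * truncRpow (R * t) a z +
        R ^ (-(2 * a)) * (closedBall (0 : E) (R * t)).indicator 1 z := by
  have hrhs₁ : 0 ≤ (R / t) ^ (-a) * truncRpow (R * t) a z :=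
    mul_nonneg (by positivity) (truncRpow_nonneg _ _ _)
  have hrhs₂ : 0 ≤ R ^ (-(2 * a)) * (closedBall (0 : E) (R * t)).indicator 1 z :=
    mul_nonneg (by positivity) (indicator_nonneg (fun _ _ => zero_le_one) z)
  by_cases hfar : R < ‖z - v‖ ∧ R < ‖z + v‖
  swap
  · have : truncRpow R a (z - v) * truncRpow R a (z + v) = 0 := by
      unfold truncRpow
      rcases not_and_or.1 hfar with h | h <;> simp [h]
    linarith
  obtain ⟨hsub, hadd⟩ := hfar
  have hlhs : truncRpow R a (z - v) * truncRpow R a (z + v) = (‖z - v‖ * ‖z + v‖) ^ (-a) := by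
    simp only [truncRpow, if_pos hsub, if_pos hadd]
    rw [Real.mul_rpow (norm_nonneg _) (norm_nonneg _)]
  rw [hlhs]
  by_cases hz : R * t < ‖z‖
  · have key := mul_norm_le_mul_norm_sub_mul_norm_add hR ht ht' hv hsub hadd hz
    have : (R / t) ^ (-a) * truncRpow (R * t) a z = (R / t * ‖z‖) ^ (-a) := by
      rw [truncRpow, if_pos hz, Real.mul_rpow (by positivity) (norm_nonneg _)]
    rw [this]
    have hz0 : 0 < ‖z‖ := (mul_pos hR ht).trans hz
    refine le_add_of_le_of_nonneg (Real.rpow_le_rpow_of_nonpos (by positivity) ?_ (by linarith))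
      hrhs₂
    rwa [div_mul_eq_mul_div, div_le_iff₀ ht, mul_comm _ t]
  · have hmem : z ∈ closedBall (0 : E) (R * t) := mem_closedBall_zero_iff.2 (not_lt.1 hz)
    rw [indicator_of_mem hmem, Pi.one_apply, mul_one, neg_mul_eq_mul_neg, Real.rpow_mul hR.le,
      Real.rpow_two]
    refine le_add_of_nonneg_of_le hrhs₁ (Real.rpow_le_rpow_of_nonpos (by positivity) ?_
      (by linarith))
    nlinarith

variable [MeasurableSpace E] [BorelSpace E] [FiniteDimensional ℝ E] (μ : Measure E)
  [μ.IsAddHaarMeasure] [Nontrivial E] {R a : ℝ}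

lemma integral_truncRpow_mul_truncRpow_add_le (hR : 0 < R) (ha : finrank ℝ E < a) (b : E) :
    ∫ x, truncRpow R a x * truncRpow R a (x + b) ∂μ ≤
      μ.real (ball 0 1) * finrank ℝ E / (a - finrank ℝ E) * R ^ (finrank ℝ E - 2 * a) := by
  have ha0 : 0 ≤ a := (Nat.cast_nonneg _).trans ha.le
  calc _ ≤ ∫ x, truncRpow R a x * R ^ (-a) ∂μ :=
        integral_mono_of_nonneg
          (ae_of_all _ fun x => mul_nonneg (truncRpow_nonneg _ _ _) (truncRpow_nonneg _ _ _))
          ((integrable_truncRpow μ hR ha).mul_const _)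
          (ae_of_all _ fun x => mul_le_mul_of_nonneg_left (truncRpow_le hR ha0 _)
            (truncRpow_nonneg _ _ _))
    _ = _ := by
        rw [integral_mul_const, integral_truncRpow μ hR ha, mul_assoc, ← Real.rpow_add hR]
        ring_nf

lemma integral_rpow_mul_truncRpow_add_rpow_mul_indicator (hR : 0 < R) (ha : finrank ℝ E < a)
    {t : ℝ} (ht : 0 < t) :
    ∫ z, ((R / t) ^ (-a) * truncRpow (R * t) a z +
        R ^ (-(2 * a)) * (closedBall (0 : E) (R * t)).indicator 1 z) ∂μ =
      μ.real (ball 0 1) * a / (a - finrank ℝ E) * R ^ (finrank ℝ E - 2 * a) *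
        t ^ finrank ℝ E := by
  rw [integral_add ((integrable_truncRpow μ (mul_pos hR ht) ha).const_mul _)
      ((integrable_indicator_one_closedBall μ 0 _).const_mul _), integral_const_mul,
    integral_const_mul, integral_truncRpow μ (mul_pos hR ht) ha,
    integral_indicator_one measurableSet_closedBall,
    Measure.addHaar_real_closedBall μ 0 (mul_pos hR ht).le]
  set d := finrank ℝ E
  have e₁ : (R / t) ^ (-a) * (R * t) ^ ((d : ℝ) - a) = R ^ ((d : ℝ) - 2 * a) * t ^ d := by
    rw [Real.div_rpow hR.le ht.le, Real.mul_rpow hR.le ht.le, Real.rpow_neg ht.le a,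
      div_inv_eq_mul, ← Real.rpow_natCast t d]
    calc _ = (R ^ (-a) * R ^ ((d : ℝ) - a)) * (t ^ a * t ^ ((d : ℝ) - a)) := by ring
      _ = _ := by rw [← Real.rpow_add hR, ← Real.rpow_add ht]; ring_nf
  have e₂ : R ^ (-(2 * a)) * (R * t) ^ d = R ^ ((d : ℝ) - 2 * a) * t ^ d := by
    rw [mul_pow, ← Real.rpow_natCast R d, ← mul_assoc, ← Real.rpow_add hR]
    ring_nf
  have had : a - d ≠ 0 := sub_ne_zero.2 ha.ne'
  rw [show μ.real (ball 0 1) * a / (a - d) =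
    μ.real (ball 0 1) * d / (a - d) + μ.real (ball 0 1) by field_simp; ring]
  linear_combination (μ.real (ball 0 1) * d / (a - d)) * e₁ + μ.real (ball 0 1) * e₂

lemma integral_truncRpow_mul_truncRpow_add_le_of_le_norm (hR : 0 < R) (ha : finrank ℝ E < a)
    {t : ℝ} (ht : 0 < t) (ht' : 15 ≤ 16 * t ^ 2) {b : E} (hb : R / 2 ≤ ‖b‖) :
    ∫ x, truncRpow R a x * truncRpow R a (x + b) ∂μ ≤
      μ.real (ball 0 1) * a / (a - finrank ℝ E) * R ^ (finrank ℝ E - 2 * a) *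
        t ^ finrank ℝ E := by
  set v : E := (2⁻¹ : ℝ) • b
  have hv : R / 4 ≤ ‖v‖ := by
    rw [norm_smul, Real.norm_of_nonneg (by norm_num)]
    linarith
  calc _ = ∫ z, truncRpow R a (z - v) * truncRpow R a (z + v) ∂μ := by
        rw [← integral_sub_right_eq_self _ v]
        congr with z
        congr 2
        module
    _ ≤ ∫ z, ((R / t) ^ (-a) * truncRpow (R * t) a z +
          R ^ (-(2 * a)) * (closedBall (0 : E) (R * t)).indicator 1 z) ∂μ :=
        integral_mono_of_nonneg
          (ae_of_all _ fun z => mul_nonneg (truncRpow_nonneg _ _ _) (truncRpow_nonneg _ _ _))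
          (((integrable_truncRpow μ (mul_pos hR ht) ha).const_mul _).add
            ((integrable_indicator_one_closedBall μ 0 _).const_mul _))
          (ae_of_all _ (truncRpow_sub_mul_truncRpow_add_le hR
            ((Nat.cast_nonneg _).trans ha.le) ht ht' hv))
    _ = _ := integral_rpow_mul_truncRpow_add_rpow_mul_indicator μ hR ha ht

lemma integral_integral_shiftedThreeFoldIntegrand_truncRpow_le (hR : 0 < R)
    (ha : finrank ℝ E < a) {t : ℝ} (ht : 0 < t) (ht' : 15 ≤ 16 * t ^ 2) {ℓ ℓ₁ ℓ₂ : ℕ}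
    (h₁ : 0 < ℓ₁) (h₂ : 0 < ℓ₂) (h₁₂ : ℓ₁ + ℓ₂ < ℓ) (y : ℕ → E) {ε : ℕ → ℝ}
    (hε : ∀ i, ε i = 1 ∨ ε i = -1) :
    ∫ x₁, ∫ x₂, shiftedThreeFoldIntegrand (truncRpow R a) ℓ ℓ₁ ℓ₂ y ε x₁ x₂ ∂μ ∂μ ≤
      μ.real (ball 0 1) ^ 2 * R ^ (2 * (finrank ℝ E : ℝ) - a * ℓ) *
        (finrank ℝ E / (a - finrank ℝ E) * (a / (a - finrank ℝ E) + 1)) * t ^ finrank ℝ E := by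
  have ha0 : 0 ≤ a := (Nat.cast_nonneg _).trans ha.le
  refine (integral_integral_shiftedThreeFoldIntegrand_le μ (truncRpow_nonneg R a)
    (truncRpow_le hR ha0) (truncRpow_even R a) (measurable_truncRpow R a)
    (integrable_truncRpow μ hR ha) (by positivity)
    (fun b hb => integral_truncRpow_mul_truncRpow_add_le_of_le_norm μ hR ha ht ht' hb)
    (integral_truncRpow_mul_truncRpow_add_le μ hR ha) h₁ h₂ h₁₂ y hε).trans ?_
  rw [integral_truncRpow μ hR ha, Measure.addHaar_real_closedBall μ 0 (by positivity)]
  set d := finrank ℝ E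
  set u := R ^ (-a)
  set vol := μ.real (ball 0 1)
  have hK : 0 ≤ (d : ℝ) / (a - d) := div_nonneg (Nat.cast_nonneg _) (sub_nonneg.2 ha.le)
  have hK' : 0 ≤ a / (a - d) := div_nonneg ha0 (sub_nonneg.2 ha.le)
  have e₁ : R ^ ((d : ℝ) - a) = R ^ d * u := by
    rw [sub_eq_add_neg, Real.rpow_add hR, Real.rpow_natCast]
  have e₂ : R ^ ((d : ℝ) - 2 * a) = R ^ d * u ^ 2 := by
    rw [show (d : ℝ) - 2 * a = d + -a * (2 : ℕ) by push_cast; ring, Real.rpow_add hR,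
      Real.rpow_mul_natCast hR.le, Real.rpow_natCast]
  have e₃ : R ^ (2 * (d : ℝ) - a * ℓ) = (R ^ d) ^ 2 * u ^ (ℓ - 3) * u ^ 3 := by
    rw [show 2 * (d : ℝ) - a * ℓ = d * (2 : ℕ) + -a * (ℓ : ℕ) by push_cast; ring,
      Real.rpow_add hR, Real.rpow_mul_natCast hR.le, Real.rpow_mul_natCast hR.le,
      Real.rpow_natCast, mul_assoc, ← pow_add, Nat.sub_add_cancel (by omega)]
  have ht2 : (2⁻¹ : ℝ) ^ d ≤ t ^ d := pow_le_pow_left₀ (by norm_num) (by nlinarith) d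
  rw [e₁, e₂, e₃, div_eq_mul_inv R, mul_pow]
  calc _ = vol ^ 2 * (R ^ d) ^ 2 * u ^ (ℓ - 3) * u ^ 3 * (d / (a - d)) *
        (a / (a - d) * t ^ d + 2⁻¹ ^ d) := by ring
    _ ≤ vol ^ 2 * (R ^ d) ^ 2 * u ^ (ℓ - 3) * u ^ 3 * (d / (a - d)) *
        (a / (a - d) * t ^ d + t ^ d) := by gcongr
    _ = _ := by ring

end PairIntegral

lemma unitBallVol_pos (n : ℕ) : 0 < unitBallVol n :=
  div_pos (Real.rpow_pos_of_pos Real.pi_pos _) (Real.Gamma_pos_of_pos (by positivity))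

lemma cutRadius_pos (n : ℕ) {δ : ℝ} (hδ : 0 < δ) : 0 < cutRadius n δ :=
  Real.rpow_pos_of_pos (div_pos hδ (unitBallVol_pos n)) _

lemma volume_real_ball_zero_one {n : ℕ} [Nonempty (Fin n)] :
    volume.real (ball (0 : EuclideanSpace ℝ (Fin n)) 1) = unitBallVol n := by
  rw [measureReal_def, EuclideanSpace.volume_ball, Fintype.card_fin, ENNReal.ofReal_one, one_pow,
    one_mul, ENNReal.toReal_ofReal (by positivity), unitBallVol, Real.sqrt_eq_rpow,
    ← Real.rpow_natCast, ← Real.rpow_mul Real.pi_pos.le]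
  ring_nf

lemma unitBallVol_rpow_mul_cutRadius_rpow {n : ℕ} (hn : n ≠ 0) {δ : ℝ} (hδ : 0 ≤ δ) (s : ℝ) :
    unitBallVol n ^ s * cutRadius n δ ^ ((n : ℝ) * s) = δ ^ s := by
  have hV := unitBallVol_pos n
  rw [cutRadius, ← Real.rpow_mul (div_nonneg hδ hV.le), one_div,
    inv_mul_cancel_left₀ (Nat.cast_ne_zero.2 hn), Real.div_rpow hδ hV.le,
    mul_div_cancel₀ _ (Real.rpow_pos_of_pos hV s).ne']

theorem shifted_three_fold_integral_bound_general
    (c δ : ℝ) (hc : 1 / 2 < c) (hδ : 0 < δ)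
    (ℓ ℓ₁ ℓ₂ ℓ₃ : ℕ)
    (h₁ : 0 < ℓ₁) (h₂ : 0 < ℓ₂) (h₃ : 0 < ℓ₃)
    (hsum : ℓ₁ + ℓ₂ + ℓ₃ = ℓ) :
    ∃ C ρ : ℝ, 0 < C ∧ ρ ∈ Set.Ioo (0 : ℝ) 1 ∧
      ∀ n : ℕ, 1 ≤ n →
      ∀ y : ℕ → EuclideanSpace ℝ (Fin n),
      ∀ ε : ℕ → ℝ, (∀ i, ε i = 1 ∨ ε i = -1) →
        unitBallVol n ^ (-(2 * (ℓ : ℝ) * c)) *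
          ∫ x₁ : EuclideanSpace ℝ (Fin n), ∫ x₂ : EuclideanSpace ℝ (Fin n),
            truncPower n c δ x₁ *
              (∏ i ∈ Finset.Ico 1 ℓ₁, truncPower n c δ (ε i • x₁ + y i)) *
            truncPower n c δ x₂ *
              (∏ i ∈ Finset.Ico ℓ₁ (ℓ₁ + ℓ₂ - 1), truncPower n c δ (ε i • x₂ + y i)) *
            (∏ i ∈ Finset.Ico (ℓ₁ + ℓ₂ - 1) (ℓ - 1),
              truncPower n c δ (ε i • (x₁ + x₂) + y i))
        ≤ C * ρ ^ n := by
  refine ⟨δ ^ (2 - 2 * c * ℓ) * ((4 * c - 1) / (2 * c - 1) ^ 2), 31 / 32,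
    mul_pos (Real.rpow_pos_of_pos hδ _) (div_pos (by linarith) (pow_pos (by linarith) 2)),
    ⟨by norm_num, by norm_num⟩, fun n hn y ε hε => ?_⟩
  have : Nonempty (Fin n) := ⟨⟨0, hn⟩⟩
  have hn' : (1 : ℝ) ≤ n := Nat.one_le_cast.2 hn
  have key := integral_integral_shiftedThreeFoldIntegrand_truncRpow_le volume
    (cutRadius_pos n hδ) (a := 2 * c * n) (by rw [finrank_euclideanSpace_fin]; nlinarith)
    (t := 31 / 32) (by norm_num) (by norm_num) (ℓ := ℓ) h₁ h₂ (by omega) y hε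
  rw [finrank_euclideanSpace_fin, volume_real_ball_zero_one] at key
  have hconst : (n : ℝ) / (2 * c * n - n) * (2 * c * n / (2 * c * n - n) + 1) =
      (4 * c - 1) / (2 * c - 1) ^ 2 := by
    have : 2 * c - 1 ≠ 0 := by linarith
    rw [show 2 * c * n - n = (n : ℝ) * (2 * c - 1) by ring]
    field_simp
    ring
  calc _ ≤ unitBallVol n ^ (-(2 * (ℓ : ℝ) * c)) * _ :=
        mul_le_mul_of_nonneg_left key (Real.rpow_nonneg (unitBallVol_pos n).le _)
    _ = _ := by
        rw [hconst, show -(2 * (ℓ : ℝ) * c) = (2 - 2 * c * ℓ) - 2 by ring,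
          show 2 * (n : ℝ) - 2 * c * n * ℓ = n * (2 - 2 * c * ℓ) by ring,
          ← unitBallVol_rpow_mul_cutRadius_rpow (n := n) (by omega) hδ.le,
          Real.rpow_sub (unitBallVol_pos n), Real.rpow_two]
        field_simp [(unitBallVol_pos n).ne']

/-- for positive integers `ℓ_1 + ℓ_2 + ℓ_3 = ℓ ≥ 3`, the normalized shifted
double integral
`V_n^{-2ℓc} ∫∫ f(x₁) ∏_{i=1}^{ℓ₁-1} f(ε_i x₁ + y_i) · f(x₂) ∏_{i=ℓ₁}^{ℓ₁+ℓ₂-2} f(ε_i x₂ + y_i)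
 · ∏_{i=ℓ₁+ℓ₂-1}^{ℓ-2} f(ε_i(x₁+x₂) + y_i)` is bounded by `C ρⁿ`, uniformly in the shifts
`y_i` and signs `ε_i`. -/
theorem shifted_three_fold_integral_bound
    (c δ : ℝ) (hc : 1 / 2 < c) (hδ : 0 < δ)
    (ℓ ℓ₁ ℓ₂ ℓ₃ : ℕ) (hℓ : 3 ≤ ℓ)
    (h₁ : 0 < ℓ₁) (h₂ : 0 < ℓ₂) (h₃ : 0 < ℓ₃)
    (hsum : ℓ₁ + ℓ₂ + ℓ₃ = ℓ) :
    ∃ C ρ : ℝ, 0 < C ∧ ρ ∈ Set.Ioo (0 : ℝ) 1 ∧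
      ∀ n : ℕ, 1 ≤ n →
      ∀ y : ℕ → EuclideanSpace ℝ (Fin n),
      ∀ ε : ℕ → ℝ, (∀ i, ε i = 1 ∨ ε i = -1) →
        unitBallVol n ^ (-(2 * (ℓ : ℝ) * c)) *
          ∫ x₁ : EuclideanSpace ℝ (Fin n), ∫ x₂ : EuclideanSpace ℝ (Fin n),
            truncPower n c δ x₁ *
              (∏ i ∈ Finset.Ico 1 ℓ₁, truncPower n c δ (ε i • x₁ + y i)) *
            truncPower n c δ x₂ *
              (∏ i ∈ Finset.Ico ℓ₁ (ℓ₁ + ℓ₂ - 1), truncPower n c δ (ε i • x₂ + y i)) *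
            (∏ i ∈ Finset.Ico (ℓ₁ + ℓ₂ - 1) (ℓ - 1),
              truncPower n c δ (ε i • (x₁ + x₂) + y i))
        ≤ C * ρ ^ n :=
  shifted_three_fold_integral_bound_general c δ hc hδ ℓ ℓ₁ ℓ₂ ℓ₃ h₁ h₂ h₃ hsum
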